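/- arXiv:1006.5237 — 2 statements merged into one kernel-verified Lean document; each statement's English description precedes it below -/
import Mathlib

section
/- Let X be a compact metric space and let R be an equivalence relation on X that is closed as a subset of X × X; let Y = X/R be the quotient space with the quotient topology (a compact Hausdorff space with a unique compatible uniform structure). Let (fₙ) be a sequence of homeomorphisms of X each of which maps every R-equivalence class onto an R-equivalence class, and let f̄ₙ : Y → Y be the induced homeomorphisms, characterized by f̄ₙ ∘ q = q ∘ fₙ where q : X → Y is the quotient map. If f̄ₙ converges to the identity uniformly on Y, then for every point p ∈ X whose R-equivalence class is the singleton {p}, the distance d(fₙ(p), p) converges to 0. -/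
open Filter Topology

/-- Let `X` be a compact metric space, `s` a closed equivalence relation on `X`, and
`Y = X ⧸ s` its quotient (compact Hausdorff, so it carries a unique compatible uniformity,
whose entourages are exactly the neighbourhoods of the diagonal). Let `fₙ` be homeomorphisms
of `X`, each mapping every equivalence class onto an equivalence class, with induced
homeomorphisms `f̄ₙ` of `Y` (characterized by `f̄ₙ ∘ q = q ∘ fₙ`). If `f̄ₙ` converges
uniformly to the identity on `Y`, then for every point `p ∈ X` whose equivalence class is
the singleton `{p}`, the distance `dist (fₙ p) p` tends to `0`. -/
theorem dist_tendsto_zero_of_induced_maps_tendsto_uniformly_id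
    {X : Type*} [MetricSpace X] [CompactSpace X] (s : Setoid X)
    (hclosed : IsClosed {p : X × X | s.r p.1 p.2})
    (f : ℕ → X ≃ₜ X)
    (hclasses : ∀ n : ℕ, ∀ x : X, ∃ z : X, (f n) '' {y | s.r x y} = {y | s.r z y})
    (fbar : ℕ → Quotient s ≃ₜ Quotient s)
    (hfbar : ∀ n : ℕ, ∀ x : X, fbar n (Quotient.mk s x) = Quotient.mk s (f n x))
    (hunif : ∀ U : Set (Quotient s × Quotient s), IsOpen U → Set.diagonal (Quotient s) ⊆ U →
      ∀ᶠ n in atTop, ∀ y : Quotient s, (fbar n y, y) ∈ U) :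
    ∀ p : X, {y | s.r p y} = {p} →
      Tendsto (fun n => dist (f n p) p) atTop (𝓝 (0 : ℝ)) := by
  intro p hp
  have hq : Topology.IsQuotientMap (Quotient.mk s) := isQuotientMap_quotient_mk'
  rw [Metric.tendsto_atTop]
  intro ε hε
  set K : Set X := {a | ε ≤ dist a p} with hK
  have hKclosed : IsClosed K :=
    isClosed_le continuous_const (continuous_id.dist continuous_const)
  have hQK : IsClosed (Quotient.mk s '' K) := by
    rw [← hq.isClosed_preimage]
    have heq : Quotient.mk s ⁻¹' (Quotient.mk s '' K) =
        Prod.snd '' ({pr : X × X | s.r pr.1 pr.2} ∩ K ×ˢ Set.univ) := by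
      ext x
      simp only [Set.mem_preimage, Set.mem_image, Set.mem_inter_iff, Set.mem_setOf_eq,
        Set.mem_prod, Set.mem_univ, and_true, Prod.exists]
      constructor
      · rintro ⟨a, haK, hax⟩
        exact ⟨a, x, ⟨Quotient.eq.mp hax, haK⟩, rfl⟩
      · rintro ⟨a, b, ⟨hab, haK⟩, rfl⟩
        exact ⟨a, haK, Quotient.eq.mpr hab⟩
    rw [heq]
    exact isClosedMap_snd_of_compactSpace _
      (hclosed.inter (hKclosed.prod isClosed_univ))
  have hQp : IsClosed ({Quotient.mk s p} : Set (Quotient s)) := by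
    rw [← hq.isClosed_preimage]
    have heq : Quotient.mk s ⁻¹' {Quotient.mk s p} = {p} := by
      ext x
      simp only [Set.mem_preimage, Set.mem_singleton_iff]
      constructor
      · intro h
        have hxp : s.r p x := Setoid.symm (Quotient.eq.mp h)
        have : x ∈ ({p} : Set X) := hp ▸ hxp
        exact this
      · rintro rfl; rfl
    rw [heq]; exact isClosed_singleton
  set U := ((Quotient.mk s '' K) ×ˢ ({Quotient.mk s p} : Set (Quotient s)))ᶜ with hU
  have hUopen : IsOpen U := (hQK.prod hQp).isOpen_compl
  have hdiag : Set.diagonal (Quotient s) ⊆ U := by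
    rintro ⟨y, y'⟩ hy
    have hyy : y = y' := hy
    subst hyy
    intro hmem
    obtain ⟨⟨a, haK, ha⟩, hy2⟩ := hmem
    have hy2' : y = Quotient.mk s p := hy2
    have : s.r p a := Setoid.symm (Quotient.eq.mp (ha.trans hy2'))
    have hap : a ∈ ({p} : Set X) := hp ▸ this
    rw [Set.mem_singleton_iff] at hap
    subst hap
    simp [hK] at haK
    exact absurd haK (not_le.mpr (by simpa using hε))
  obtain ⟨N, hN⟩ := eventually_atTop.mp (hunif U hUopen hdiag)
  refine ⟨N, fun n hn => ?_⟩
  have h1 := hN n hn (Quotient.mk s p)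
  rw [hfbar] at h1
  rw [Real.dist_eq, sub_zero, abs_of_nonneg dist_nonneg]
  by_contra hcon
  push_neg at hcon
  exact h1 ⟨⟨f n p, hcon, rfl⟩, rfl⟩
end

section
/- Let G be a nontrivial torsion-free group, let α be an automorphism of G, let n be a positive integer, and let g ∈ G be such that αⁿ(h) = g h g⁻¹ for all h ∈ G (i.e., αⁿ is the inner automorphism given by conjugation by g). Then the semidirect product G ⋊_α ℤ, in which the generator t of ℤ acts by t h t⁻¹ = α(h), contains a subgroup isomorphic to ℤ × ℤ. -/
/-!
If `αⁿ` is conjugation by `g`, then `z = g⁻¹ tⁿ` centralizes `G` in `G ⋊[α] ℤ`. For any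
`x ≠ 1` the commuting elements `x` and `z` generate a copy of `ℤ × ℤ`: projecting to `ℤ` kills
`x` and sends `z` to `n ≠ 0`, and `x` has infinite order because `G` is torsion-free.
-/

/-- A monoid is torsion-free if no nontrivial element has finite order
(the definition `Monoid.IsTorsionFree` of the older Mathlib, since removed). -/
def Monoid.IsTorsionFree (G : Type*) [Monoid G] : Prop :=
  ∀ g : G, g ≠ 1 → ¬IsOfFinOrder g

open SemidirectProduct

section CommutingPair

variable {M : Type*} [Group M] {a b : M}

def Commute.zpowersProdHom (h : Commute a b) : Multiplicative (ℤ × ℤ) →* M :=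
  ((zpowersHom M a).noncommCoprod (zpowersHom M b) fun _ _ => h.zpow_zpow _ _).comp
    (MulEquiv.prodMultiplicative ℤ ℤ).toMonoidHom

theorem Commute.zpowersProdHom_apply (h : Commute a b) (p : Multiplicative (ℤ × ℤ)) :
    h.zpowersProdHom p = a ^ p.toAdd.1 * b ^ p.toAdd.2 :=
  rfl

theorem Commute.zpowersProdHom_injective {H : Type*} [Group H] (h : Commute a b) {ψ : M →* H}
    (hψa : ψ a = 1) (hψb : ¬IsOfFinOrder (ψ b)) (ha : ¬IsOfFinOrder a) :
    Function.Injective h.zpowersProdHom := by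
  refine (injective_iff_map_eq_one _).mpr fun p hp => ?_
  rw [zpowersProdHom_apply] at hp
  have hj : p.toAdd.2 = 0 := by
    have hψ := congrArg ψ hp
    rw [map_mul, map_zpow, map_zpow, hψa, one_zpow, one_mul, map_one] at hψ
    by_contra hj
    exact hψb (isOfFinOrder_iff_zpow_eq_one.mpr ⟨_, hj, hψ⟩)
  have hi : p.toAdd.1 = 0 := by
    rw [hj, zpow_zero, mul_one] at hp
    by_contra hi
    exact ha (isOfFinOrder_iff_zpow_eq_one.mpr ⟨_, hi, hp⟩)
  exact congrArg Multiplicative.ofAdd (Prod.ext hi hj)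

end CommutingPair

theorem SemidirectProduct.commute_inl_inl_inv_mul_inr {N H : Type*} [Group N] [Group H]
    {φ : H →* MulAut N} {g x : N} {h : H} (hφ : φ h x = g * x * g⁻¹) :
    Commute (inl x : N ⋊[φ] H) (inl g⁻¹ * inr h) := by
  ext <;> simp [hφ, mul_assoc]

/-- Let `G` be a nontrivial torsion-free group, `α` an automorphism of `G`, `n` a positive
integer and `g ∈ G` such that `αⁿ` is conjugation by `g`. Then the semidirect product
`G ⋊[α] ℤ` (in which the generator of `ℤ` acts by `α`) contains a subgroup isomorphic
to `ℤ × ℤ`. -/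
theorem semidirectProduct_contains_int_times_int
    {G : Type*} [Group G] [Nontrivial G] (htf : Monoid.IsTorsionFree G)
    (α : MulAut G) (n : ℕ) (hn : 0 < n) (g : G)
    (hconj : ∀ h : G, (α ^ n) h = g * h * g⁻¹) :
    ∃ f : Multiplicative (ℤ × ℤ) →*
        SemidirectProduct G (Multiplicative ℤ) (zpowersHom (MulAut G) α),
      Function.Injective f := by
  obtain ⟨x, hx⟩ := exists_ne (1 : G)
  have hcomm := commute_inl_inl_inv_mul_inr (φ := zpowersHom (MulAut G) α)
    (h := Multiplicative.ofAdd (n : ℤ)) (by simpa using hconj x)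
  refine ⟨hcomm.zpowersProdHom, hcomm.zpowersProdHom_injective (ψ := rightHom) (rightHom_inl x)
    ?_ ?_⟩
  · simpa using not_isOfFinOrder_of_isMulTorsionFree (a := Multiplicative.ofAdd (n : ℤ))
      (by simpa using hn.ne')
  · exact fun hfin => htf x hx ((inl_injective.isOfFinOrder_iff (f := inl)).mp hfin)
end
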